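/- Let (H,K) be a match pair of finite groupoids for G with middle map m. Then for every unit u ∈ G⁰, Card(m⁻¹(u)) = Card(G^u), where G^u = {g ∈ G : r(g) = u}. -/

import Mathlib

/-!
Write `g = h k` with `h ∈ H`, `k ∈ K`, and also `g = κ η` with `κ = q₁ g ∈ K`,
`η = q₂ g ∈ H`, obtained by inverting the factorization of `g⁻¹`. Then `h⁻¹ κ = k η⁻¹`, so
`σ g := h⁻¹ κ` has `H`-part `h⁻¹` and, read as a `K H`-product, `K`-part `k`; hence
`σ (σ g) = h k = g`. As `r (σ g) = s h = m g` and `m (σ g) = s h⁻¹ = r g`, the involution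
`σ` (`MatchPair.swap`) exchanges `G^u` and `m⁻¹(u)`.
-/

/-- A (small) groupoid structure on a carrier type `G` of "arrows", with
source map `s`, range map `r`, partial multiplication `mul` (defined when
`s x = r y`) and inversion `inv`.  Units are identified with the elements
`s x`, `r x`. -/
structure Gpd (G : Type*) where
  s : G → G
  r : G → G
  mul : ∀ x y : G, s x = r y → G
  inv : G → G
  s_mul : ∀ x y h, s (mul x y h) = s y
  r_mul : ∀ x y h, r (mul x y h) = r x
  s_inv : ∀ x, s (inv x) = r x
  r_inv : ∀ x, r (inv x) = s x
  s_s : ∀ x, s (s x) = s x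
  r_s : ∀ x, r (s x) = s x
  s_r : ∀ x, s (r x) = r x
  r_r : ∀ x, r (r x) = r x
  mul_source : ∀ x (h : s x = r (s x)), mul x (s x) h = x
  range_mul : ∀ x (h : s (r x) = r x), mul (r x) x h = x
  mul_inv : ∀ x (h : s x = r (inv x)), mul x (inv x) h = r x
  inv_mul : ∀ x (h : s (inv x) = r x), mul (inv x) x h = s x
  mul_assoc : ∀ x y z (hxy : s x = r y) (hyz : s y = r z)
      (h1 : s (mul x y hxy) = r z) (h2 : s x = r (mul y z hyz)),
      mul (mul x y hxy) z h1 = mul x (mul y z hyz) h2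

namespace Gpd

variable {G : Type*} (𝒢 : Gpd G)

/-- The set of units `G⁰` of the groupoid. -/
def units : Set G := {u | 𝒢.r u = u}

/-- A wide subgroupoid: a subset closed under multiplication and inversion and
containing all units. -/
structure IsSubgpd (H : Set G) : Prop where
  mul_mem : ∀ x y (h : 𝒢.s x = 𝒢.r y), x ∈ H → y ∈ H → 𝒢.mul x y h ∈ H
  inv_mem : ∀ x, x ∈ H → 𝒢.inv x ∈ H
  unit_mem : ∀ u, u ∈ 𝒢.units → u ∈ H

/-- A match pair of subgroupoids `H`, `K` of `G`, together with the projection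
maps `p₁ : G → H`, `p₂ : G → K` of the unique factorization `g = p₁ g * p₂ g`. -/
structure MatchPair (H K : Set G) (p₁ p₂ : G → G) : Prop where
  subH : 𝒢.IsSubgpd H
  subK : 𝒢.IsSubgpd K
  inter : H ∩ K ⊆ 𝒢.units
  p₁_mem : ∀ g, p₁ g ∈ H
  p₂_mem : ∀ g, p₂ g ∈ K
  comp : ∀ g, 𝒢.s (p₁ g) = 𝒢.r (p₂ g)
  decomp : ∀ g, g = 𝒢.mul (p₁ g) (p₂ g) (comp g)
  uniq : ∀ h, h ∈ H → ∀ k, k ∈ K → ∀ hc : 𝒢.s h = 𝒢.r k,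
      p₁ (𝒢.mul h k hc) = h ∧ p₂ (𝒢.mul h k hc) = k

theorem MatchPair.s_p₂ {H K : Set G} {p₁ p₂ : G → G}
    (mp : 𝒢.MatchPair H K p₁ p₂) (g : G) : 𝒢.s (p₂ g) = 𝒢.s g := by
  conv_rhs => rw [mp.decomp g]
  rw [𝒢.s_mul]

theorem MatchPair.r_p₁ {H K : Set G} {p₁ p₂ : G → G}
    (mp : 𝒢.MatchPair H K p₁ p₂) (g : G) : 𝒢.r (p₁ g) = 𝒢.r g := by
  conv_rhs => rw [mp.decomp g]
  rw [𝒢.r_mul]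

/-- the left "action" `k ▷ h = p₁ (kh)` -/
def rAct (p₁ : G → G) (k h : G) (hc : 𝒢.s k = 𝒢.r h) : G := p₁ (𝒢.mul k h hc)

/-- the right "action" `k ◁ h = p₂ (kh)` -/
def lAct (p₂ : G → G) (k h : G) (hc : 𝒢.s k = 𝒢.r h) : G := p₂ (𝒢.mul k h hc)

end Gpd

namespace Gpd

variable {G : Type*} (𝒢 : Gpd G)

theorem inv_mul_cancel_left (x y : G) (hxy : 𝒢.s x = 𝒢.r y)
    (h : 𝒢.s (𝒢.inv x) = 𝒢.r (𝒢.mul x y hxy)) :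
    𝒢.mul (𝒢.inv x) (𝒢.mul x y hxy) h = y := by
  rw [← 𝒢.mul_assoc _ _ _ (𝒢.s_inv x) hxy (by rw [𝒢.s_mul]; exact hxy) h]
  simp only [𝒢.inv_mul, hxy, 𝒢.range_mul]

theorem mul_inv_cancel_right (x y : G) (hxy : 𝒢.s x = 𝒢.r y)
    (h : 𝒢.s (𝒢.mul x y hxy) = 𝒢.r (𝒢.inv y)) :
    𝒢.mul (𝒢.mul x y hxy) (𝒢.inv y) h = x := by
  rw [𝒢.mul_assoc _ _ _ hxy (𝒢.r_inv y).symm h (by rw [𝒢.r_mul]; exact hxy)]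
  simp only [𝒢.mul_inv, ← hxy, 𝒢.mul_source]

theorem eq_inv_of_mul_eq_r (x y : G) (hxy : 𝒢.s x = 𝒢.r y) (e : 𝒢.mul x y hxy = 𝒢.r x) :
    y = 𝒢.inv x := by
  calc y = 𝒢.mul (𝒢.inv x) (𝒢.mul x y hxy) (by rw [𝒢.s_inv, 𝒢.r_mul]) :=
        (𝒢.inv_mul_cancel_left x y hxy _).symm
    _ = 𝒢.inv x := by simp only [e, ← 𝒢.s_inv x, 𝒢.mul_source]

theorem inv_inv (x : G) : 𝒢.inv (𝒢.inv x) = x :=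
  (𝒢.eq_inv_of_mul_eq_r (𝒢.inv x) x (𝒢.s_inv x) (by rw [𝒢.inv_mul, 𝒢.r_inv])).symm

theorem mul_inv_cancel_left (x y : G) (hxy : 𝒢.s (𝒢.inv x) = 𝒢.r y)
    (h : 𝒢.s x = 𝒢.r (𝒢.mul (𝒢.inv x) y hxy)) :
    𝒢.mul x (𝒢.mul (𝒢.inv x) y hxy) h = y := by
  have := 𝒢.inv_mul_cancel_left (𝒢.inv x) y hxy (by rwa [𝒢.inv_inv])
  simpa only [𝒢.inv_inv] using this

theorem mul_inv_rev (x y : G) (hxy : 𝒢.s x = 𝒢.r y)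
    (h : 𝒢.s (𝒢.inv y) = 𝒢.r (𝒢.inv x)) :
    𝒢.inv (𝒢.mul x y hxy) = 𝒢.mul (𝒢.inv y) (𝒢.inv x) h := by
  refine (𝒢.eq_inv_of_mul_eq_r _ _ (by rw [𝒢.s_mul, 𝒢.r_mul, 𝒢.r_inv]) ?_).symm
  rw [𝒢.mul_assoc _ _ _ hxy (by rw [𝒢.r_mul, 𝒢.r_inv]) _ (by rw [𝒢.r_mul]; exact hxy)]
  simp only [𝒢.mul_inv_cancel_left, 𝒢.mul_inv, 𝒢.r_mul]

theorem inv_mul_eq_mul_inv_of_mul_eq {a b c d : G} {hab : 𝒢.s a = 𝒢.r b}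
    {hcd : 𝒢.s c = 𝒢.r d} (e : 𝒢.mul a b hab = 𝒢.mul c d hcd)
    (h : 𝒢.s (𝒢.inv a) = 𝒢.r c) (h' : 𝒢.s b = 𝒢.r (𝒢.inv d)) :
    𝒢.mul (𝒢.inv a) c h = 𝒢.mul b (𝒢.inv d) h' := by
  rw [← 𝒢.inv_mul_cancel_left a (𝒢.mul b (𝒢.inv d) h') (by rw [𝒢.r_mul]; exact hab)
      (by rw [𝒢.s_inv, 𝒢.r_mul])]
  simp only [← 𝒢.mul_assoc a b _ hab h' (by rw [𝒢.s_mul]; exact h') (by rw [𝒢.r_mul]; exact hab),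
    e, 𝒢.mul_inv_cancel_right]

def q₁ (p₂ : G → G) (g : G) : G := 𝒢.inv (p₂ (𝒢.inv g))

def q₂ (p₁ : G → G) (g : G) : G := 𝒢.inv (p₁ (𝒢.inv g))

namespace MatchPair

variable {𝒢} {H K : Set G} {p₁ p₂ : G → G} (mp : 𝒢.MatchPair H K p₁ p₂)
include mp

theorem p₁_mul {h k : G} (hh : h ∈ H) (hk : k ∈ K) (hc : 𝒢.s h = 𝒢.r k) :
    p₁ (𝒢.mul h k hc) = h :=
  (mp.uniq h hh k hk hc).1

theorem p₂_mul {h k : G} (hh : h ∈ H) (hk : k ∈ K) (hc : 𝒢.s h = 𝒢.r k) :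
    p₂ (𝒢.mul h k hc) = k :=
  (mp.uniq h hh k hk hc).2

theorem q₁_mem (g : G) : 𝒢.q₁ p₂ g ∈ K := mp.subK.inv_mem _ (mp.p₂_mem _)

theorem q₂_mem (g : G) : 𝒢.q₂ p₁ g ∈ H := mp.subH.inv_mem _ (mp.p₁_mem _)

theorem r_q₁ (g : G) : 𝒢.r (𝒢.q₁ p₂ g) = 𝒢.r g := by
  rw [q₁, 𝒢.r_inv, mp.s_p₂, 𝒢.s_inv]

theorem s_q₁_eq_r_q₂ (g : G) : 𝒢.s (𝒢.q₁ p₂ g) = 𝒢.r (𝒢.q₂ p₁ g) := by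
  rw [q₁, q₂, 𝒢.s_inv, 𝒢.r_inv, mp.comp]

theorem q₁_mul_q₂ (g : G) : 𝒢.mul (𝒢.q₁ p₂ g) (𝒢.q₂ p₁ g) (mp.s_q₁_eq_r_q₂ g) = g := by
  have := 𝒢.mul_inv_rev _ _ (mp.comp (𝒢.inv g)) (mp.s_q₁_eq_r_q₂ g)
  rw [← mp.decomp, 𝒢.inv_inv] at this
  exact this.symm

theorem q₁_mul {k h : G} (hk : k ∈ K) (hh : h ∈ H) (hc : 𝒢.s k = 𝒢.r h) :
    𝒢.q₁ p₂ (𝒢.mul k h hc) = k := by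
  rw [q₁, 𝒢.mul_inv_rev _ _ hc (by rw [𝒢.s_inv, 𝒢.r_inv, hc]),
    mp.p₂_mul (mp.subH.inv_mem h hh) (mp.subK.inv_mem k hk), 𝒢.inv_inv]

def swap (g : G) : G :=
  𝒢.mul (𝒢.inv (p₁ g)) (𝒢.q₁ p₂ g) (by rw [𝒢.s_inv, mp.r_p₁, mp.r_q₁])

theorem p₁_swap (g : G) : p₁ (mp.swap g) = 𝒢.inv (p₁ g) :=
  mp.p₁_mul (mp.subH.inv_mem _ (mp.p₁_mem g)) (mp.q₁_mem g) _

theorem r_swap (g : G) : 𝒢.r (mp.swap g) = 𝒢.s (p₁ g) := by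
  rw [swap, 𝒢.r_mul, 𝒢.r_inv]

theorem swap_eq (g : G) :
    mp.swap g = 𝒢.mul (p₂ g) (𝒢.inv (𝒢.q₂ p₁ g))
      (by rw [𝒢.r_inv, mp.s_p₂, q₂, 𝒢.s_inv, mp.r_p₁, 𝒢.r_inv]) :=
  𝒢.inv_mul_eq_mul_inv_of_mul_eq ((mp.decomp g).symm.trans (mp.q₁_mul_q₂ g).symm) _ _

theorem q₁_swap (g : G) : 𝒢.q₁ p₂ (mp.swap g) = p₂ g := by
  rw [mp.swap_eq, mp.q₁_mul (mp.p₂_mem g) (mp.subH.inv_mem _ (mp.q₂_mem g))]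

theorem swap_swap (g : G) : mp.swap (mp.swap g) = g := by
  change 𝒢.mul (𝒢.inv (p₁ (mp.swap g))) (𝒢.q₁ p₂ (mp.swap g)) _ = g
  simp only [mp.p₁_swap, mp.q₁_swap, 𝒢.inv_inv]
  exact (mp.decomp g).symm

end MatchPair

end Gpd

theorem stmt4_general {G : Type*} (𝒢 : Gpd G) (H K : Set G) (p₁ p₂ : G → G)
    (mp : 𝒢.MatchPair H K p₁ p₂) (u : G) :
    Set.ncard {g : G | 𝒢.s (p₁ g) = u} = Set.ncard {g : G | 𝒢.r g = u} := by
  have hswap : Function.Involutive mp.swap := mp.swap_swap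
  have hfibre : mp.swap ⁻¹' {g | 𝒢.r g = u} = {g | 𝒢.s (p₁ g) = u} := by
    ext g
    simp only [Set.mem_preimage, Set.mem_ofPred_eq, mp.r_swap]
  rw [← hfibre, ← hswap.image_eq_preimage_symm, Set.ncard_image_of_injective _ hswap.injective]

/-- For a match pair `(H,K)` with middle map `m = s ∘ p₁`, for
every unit `u`: `Card (m⁻¹ u) = Card (G^u)`. -/
theorem stmt4 {G : Type*} [Finite G] (𝒢 : Gpd G) (H K : Set G) (p₁ p₂ : G → G)
    (mp : 𝒢.MatchPair H K p₁ p₂) (u : G) (hu : u ∈ 𝒢.units) :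
    Set.ncard {g : G | 𝒢.s (p₁ g) = u} = Set.ncard {g : G | 𝒢.r g = u} :=
  stmt4_general 𝒢 H K p₁ p₂ mp u
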